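/- arXiv:2411.17729 — 7 statements merged into one kernel-verified Lean document; each statement's English description precedes it below -/
import Mathlib

section
/- Let A be an m×m complex matrix with operator norm γ = ‖A‖ < 1, let z be a complex number with |z| = 1, and let N be a natural number. Then the matrix I_m - z^{-1}A is invertible and ‖(I_m - z^{-1}A)^{-1} - ∏_{n=0}^{N} (I_m + (z^{-1}A)^{2^n})‖ ≤ γ^{2^{N+1}} / (1 - γ). -/
/-!
Put `B = z⁻¹ • A`, so `‖B‖ = γ`. The product telescopes:
`(∏_{n ≤ N} (1 + B^(2^n))) * (1 - B) = 1 - B^(2^(N+1))`, hence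
`(1 - B)⁻¹ - ∏_{n ≤ N} (1 + B^(2^n)) = B^(2^(N+1)) * (1 - B)⁻¹`.
A left inverse `X` of `1 - B` satisfies `C * X = C + C * X * B`, so `‖C * X‖ ≤ ‖C‖ / (1 - ‖B‖)`.
-/

open scoped Matrix.Norms.L2Operator

theorem prod_one_add_pow_two_pow_mul_one_sub {R : Type*} [Ring R] (B : R) (N : ℕ) :
    ((List.range (N + 1)).map fun n => 1 + B ^ 2 ^ n).prod * (1 - B) = 1 - B ^ 2 ^ (N + 1) := by
  induction N with
  | zero =>
    simp only [zero_add, List.range_one, List.map_singleton, List.prod_singleton, pow_zero,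
      pow_one]
    noncomm_ring
  | succ N ih =>
    have hcB : Commute (1 + B ^ 2 ^ (N + 1)) B :=
      (Commute.one_left B).add_left ((Commute.refl B).pow_left _)
    rw [List.range_succ, List.map_append, List.prod_append, List.map_singleton,
      List.prod_singleton, mul_assoc, ((Commute.one_right _).sub_right hcB).eq, ← mul_assoc, ih,
      pow_succ 2 (N + 1), pow_mul, sq]
    generalize B ^ 2 ^ (N + 1) = c
    noncomm_ring

theorem norm_mul_le_div_of_mul_one_sub_eq_one {R : Type*} [NormedRing R] {B X : R}
    (hB : ‖B‖ < 1) (hX : X * (1 - B) = 1) (C : R) : ‖C * X‖ ≤ ‖C‖ / (1 - ‖B‖) := by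
  have hCX : C * X = C + C * X * B :=
    calc C * X = C * (X * (1 - B)) + C * X * B := by noncomm_ring
      _ = C + C * X * B := by rw [hX, mul_one]
  have hle : ‖C * X‖ ≤ ‖C‖ + ‖C * X‖ * ‖B‖ :=
    calc ‖C * X‖ = ‖C + C * X * B‖ := congrArg _ hCX
      _ ≤ ‖C‖ + ‖C * X * B‖ := norm_add_le _ _
      _ ≤ ‖C‖ + ‖C * X‖ * ‖B‖ := by gcongr; exact norm_mul_le _ _
  rw [le_div_iff₀ (sub_pos.2 hB)]
  linarith

theorem norm_inverse_one_sub_sub_prod_one_add_pow_two_pow_le {R : Type*} [NormedRing R]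
    [CompleteSpace R] {B : R} (hB : ‖B‖ < 1) (N : ℕ) :
    ‖Ring.inverse (1 - B) - ((List.range (N + 1)).map fun n => 1 + B ^ 2 ^ n).prod‖
      ≤ ‖B‖ ^ 2 ^ (N + 1) / (1 - ‖B‖) := by
  have hU := isUnit_one_sub_of_norm_lt_one hB
  have hP : ((List.range (N + 1)).map fun n => 1 + B ^ 2 ^ n).prod
      = (1 - B ^ 2 ^ (N + 1)) * Ring.inverse (1 - B) := by
    rw [← prod_one_add_pow_two_pow_mul_one_sub, mul_assoc, Ring.mul_inverse_cancel _ hU, mul_one]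
  rw [hP, sub_mul, one_mul, sub_sub_cancel]
  calc _ ≤ ‖B ^ 2 ^ (N + 1)‖ / (1 - ‖B‖) :=
        norm_mul_le_div_of_mul_one_sub_eq_one hB (Ring.inverse_mul_cancel _ hU) _
    _ ≤ ‖B‖ ^ 2 ^ (N + 1) / (1 - ‖B‖) := by
        gcongr
        exact norm_pow_le' B (by positivity)

/-- Let `A` be an `m × m` complex matrix with operator norm (largest singular value)
`γ = ‖A‖ < 1`, let `z` be a complex number with `|z| = 1`, and let `N` be a natural
number. Then `I_m - z⁻¹ • A` is invertible and
`‖(I_m - z⁻¹ • A)⁻¹ - ∏_{n=0}^{N} (I_m + (z⁻¹ • A)^(2^n))‖ ≤ γ^(2^(N+1)) / (1 - γ)`. -/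
theorem cascade_matrix_bound {m : ℕ} (A : Matrix (Fin m) (Fin m) ℂ)
    (γ : ℝ) (hγ : γ = ‖A‖) (hγ1 : γ < 1)
    (z : ℂ) (hz : ‖z‖ = 1) (N : ℕ) :
    IsUnit (1 - z⁻¹ • A) ∧
      ‖(1 - z⁻¹ • A)⁻¹ -
          (((List.range (N + 1)).map (fun n => 1 + (z⁻¹ • A) ^ 2 ^ n)).prod)‖
        ≤ γ ^ 2 ^ (N + 1) / (1 - γ) := by
  have hB : ‖z⁻¹ • A‖ = γ := by rw [norm_smul, norm_inv, hz, inv_one, one_mul, hγ]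
  refine ⟨isUnit_one_sub_of_norm_lt_one (hB ▸ hγ1), ?_⟩
  rw [Matrix.nonsing_inv_eq_ringInverse, ← hB]
  exact norm_inverse_one_sub_sub_prod_one_add_pow_two_pow_le (hB ▸ hγ1) N
end

section
/- Let Ā be an m×m complex matrix with operator norm γ = ‖Ā‖ < 1, let B̄ be an m×p, C a q×m, and D a q×p complex matrix, and let z be a complex number with |z| = 1. Define the transfer function H(z) = C (I_m - z^{-1}Ā)^{-1} B̄ + D and its cascade approximation H_N(z) = C ∏_{n=0}^{N} (I_m + (z^{-1}Ā)^{2^n}) B̄ + D. Then for every natural number N, ‖H(z) - H_N(z)‖ ≤ (γ^{2^{N+1}} / (1 - γ)) · ‖C‖ · ‖B̄‖. -/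
/-!
Telescoping `(1 - b)(1 + b) = 1 - b²` along the factors gives
`(1 - A) ∏_{n ≤ N} (1 + A^(2^n)) = 1 - A^(2^(N+1))`, so the cascade product differs from
`(1 - A)⁻¹` exactly by the geometric tail `(1 - A)⁻¹ A^(2^(N+1)) = ∑_{n ≥ 2^(N+1)} Aⁿ`,
whose norm is at most `γ^(2^(N+1)) / (1 - γ)`.
-/

open scoped Matrix.Norms.L2Operator

section Ring

variable {R : Type*} [Ring R]

def cascadeProd (a : R) (N : ℕ) : R :=
  ((List.range (N + 1)).map fun n => 1 + a ^ 2 ^ n).prod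

theorem cascadeProd_succ (a : R) (N : ℕ) :
    cascadeProd a (N + 1) = cascadeProd a N * (1 + a ^ 2 ^ (N + 1)) := by
  simp only [cascadeProd, List.range_succ (n := N + 1), List.map_append, List.prod_append,
    List.map_cons, List.map_nil, List.prod_cons, List.prod_nil, mul_one]

theorem one_sub_mul_cascadeProd (a : R) (N : ℕ) :
    (1 - a) * cascadeProd a N = 1 - a ^ 2 ^ (N + 1) := by
  induction N with
  | zero => simp only [cascadeProd, zero_add, List.range_one, List.map_cons, List.map_nil,
      List.prod_cons, List.prod_nil, mul_one, pow_zero, pow_one]; noncomm_ring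
  | succ N ih =>
    rw [cascadeProd_succ, ← mul_assoc, ih, pow_succ 2 (N + 1), pow_mul, sq]
    noncomm_ring

theorem inverse_one_sub_sub_cascadeProd {a : R} (h : IsUnit (1 - a)) (N : ℕ) :
    Ring.inverse (1 - a) - cascadeProd a N = Ring.inverse (1 - a) * a ^ 2 ^ (N + 1) := by
  have hprod : cascadeProd a N = Ring.inverse (1 - a) * (1 - a ^ 2 ^ (N + 1)) := by
    rw [← one_sub_mul_cascadeProd, ← mul_assoc, Ring.inverse_mul_cancel _ h, one_mul]
  rw [hprod, mul_sub, mul_one, sub_sub_cancel]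

end Ring

/-- Writing the left side as `∑' n, a^(n + k)` with `n + k > 0` avoids any assumption on `‖1‖`. -/
theorem norm_inverse_one_sub_mul_pow_le {R : Type*} [NormedRing R] [CompleteSpace R] {a : R}
    (ha : ‖a‖ < 1) {k : ℕ} (hk : 0 < k) :
    ‖Ring.inverse (1 - a) * a ^ k‖ ≤ ‖a‖ ^ k / (1 - ‖a‖) := by
  rw [← geom_series_eq_inverse a ha,
    ← (summable_geometric_of_norm_lt_one ha).tsum_mul_right (a ^ k)]
  have hgeom := (summable_geometric_of_lt_one (norm_nonneg a) ha).mul_left (‖a‖ ^ k)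
  have hterm : ∀ n, ‖a ^ n * a ^ k‖ ≤ ‖a‖ ^ k * ‖a‖ ^ n := fun n => by
    rw [← pow_add, ← pow_add, add_comm k]
    exact norm_pow_le' a (by omega)
  have hsum : Summable fun n => ‖a ^ n * a ^ k‖ :=
    hgeom.of_nonneg_of_le (fun _ => norm_nonneg _) hterm
  calc ‖∑' n, a ^ n * a ^ k‖ ≤ ∑' n, ‖a ^ n * a ^ k‖ := norm_tsum_le_tsum_norm hsum
    _ ≤ ∑' n, ‖a‖ ^ k * ‖a‖ ^ n := hsum.tsum_le_tsum hterm hgeom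
    _ = ‖a‖ ^ k / (1 - ‖a‖) := by
      rw [tsum_mul_left, tsum_geometric_of_lt_one (norm_nonneg a) ha, div_eq_mul_inv]

/-- Let `Ā` be an `m × m` complex matrix with operator norm `γ = ‖Ā‖ < 1`, let `B̄`, `C`,
`D` be `m × p`, `q × m`, `q × p` complex matrices, and let `z` be a complex number with
`|z| = 1`.  With the transfer function `H(z) = C (I_m - z⁻¹Ā)⁻¹ B̄ + D` and its cascade
approximation `H_N(z) = C ∏_{n=0}^{N} (I_m + (z⁻¹Ā)^(2^n)) B̄ + D`, for every natural
number `N` one has `‖H(z) - H_N(z)‖ ≤ (γ^(2^(N+1)) / (1 - γ)) * ‖C‖ * ‖B̄‖`.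
All norms are the operator norms induced by the Euclidean norms. -/
theorem transfer_function_cascade_bound {m p q : ℕ}
    (Abar : Matrix (Fin m) (Fin m) ℂ) (Bbar : Matrix (Fin m) (Fin p) ℂ)
    (C : Matrix (Fin q) (Fin m) ℂ) (D : Matrix (Fin q) (Fin p) ℂ)
    (γ : ℝ) (hγ : γ = ‖Abar‖) (hγ1 : γ < 1)
    (z : ℂ) (hz : ‖z‖ = 1) (N : ℕ)
    (H HN : Matrix (Fin q) (Fin p) ℂ)
    (hH : H = C * (1 - z⁻¹ • Abar)⁻¹ * Bbar + D)
    (hHN : HN = C * (((List.range (N + 1)).map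
        (fun n => 1 + (z⁻¹ • Abar) ^ 2 ^ n)).prod) * Bbar + D) :
    ‖H - HN‖ ≤ γ ^ 2 ^ (N + 1) / (1 - γ) * ‖C‖ * ‖Bbar‖ := by
  set A := z⁻¹ • Abar
  have hA : ‖A‖ = γ := by rw [norm_smul, norm_inv, hz, inv_one, one_mul, hγ]
  have hunit : IsUnit (1 - A) := (Units.oneSub A (hA ▸ hγ1)).isUnit
  have hdiff : H - HN = C * (Ring.inverse (1 - A) * A ^ 2 ^ (N + 1)) * Bbar := by
    rw [hH, hHN, Matrix.nonsing_inv_eq_ringInverse, add_sub_add_right_eq_sub, ← Matrix.sub_mul,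
      ← Matrix.mul_sub, ← inverse_one_sub_sub_cascadeProd hunit, cascadeProd]
  rw [hdiff]
  calc _ ≤ ‖C‖ * ‖Ring.inverse (1 - A) * A ^ 2 ^ (N + 1)‖ * ‖Bbar‖ :=
        (Matrix.l2_opNorm_mul _ _).trans
          (mul_le_mul_of_nonneg_right (Matrix.l2_opNorm_mul _ _) (norm_nonneg _))
    _ ≤ ‖C‖ * (γ ^ 2 ^ (N + 1) / (1 - γ)) * ‖Bbar‖ := by
        gcongr
        exact hA ▸ norm_inverse_one_sub_mul_pow_le (hA ▸ hγ1) (by positivity)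
    _ = γ ^ 2 ^ (N + 1) / (1 - γ) * ‖C‖ * ‖Bbar‖ := by ring
end

section
/- Let Ā be an m×m complex matrix and let (w_ℓ)_{ℓ=0}^{L-1} be vectors in ℂ^m. Define v_ℓ^{(0)} = w_ℓ for 0 ≤ ℓ ≤ L-1, and for each n ≥ 1 define v_ℓ^{(n)} = Ā^{2^{n-1}} v_{ℓ-2^{n-1}}^{(n-1)} + v_ℓ^{(n-1)} if 2^{n-1} ≤ ℓ ≤ L-1 and v_ℓ^{(n)} = v_ℓ^{(n-1)} if 0 ≤ ℓ ≤ 2^{n-1} - 1. Then for every n ≥ 0 and every 0 ≤ ℓ ≤ L-1, v_ℓ^{(n)} = ∑_{j=0}^{min(ℓ, 2^n - 1)} Ā^j w_{ℓ-j}. -/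
/-- Correctness of the cascade update rule: starting with `v_ℓ^(0) = w_ℓ` and updating
`v_ℓ^(n) = Ā^(2^(n-1)) v_{ℓ-2^(n-1)}^(n-1) + v_ℓ^(n-1)` for `2^(n-1) ≤ ℓ ≤ L-1`
(leaving `v_ℓ^(n) = v_ℓ^(n-1)` for `0 ≤ ℓ < 2^(n-1)`), one gets for every stage `n`
and every `0 ≤ ℓ ≤ L-1` that `v_ℓ^(n) = ∑_{j=0}^{min(ℓ, 2^n - 1)} Ā^j w_{ℓ-j}`.
(The stage-`n+1` update, `n ≥ 0`, encodes the stage-`n` update for `n ≥ 1`.) -/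
theorem cascade_update_correct {m L : ℕ} (Abar : Matrix (Fin m) (Fin m) ℂ)
    (w : ℕ → Fin m → ℂ) (v : ℕ → ℕ → Fin m → ℂ)
    (h0 : ∀ ℓ : ℕ, ℓ < L → v 0 ℓ = w ℓ)
    (hupd : ∀ n : ℕ, ∀ ℓ : ℕ, 2 ^ n ≤ ℓ → ℓ < L →
      v (n + 1) ℓ = (Abar ^ 2 ^ n).mulVec (v n (ℓ - 2 ^ n)) + v n ℓ)
    (hkeep : ∀ n : ℕ, ∀ ℓ : ℕ, ℓ < 2 ^ n →
      v (n + 1) ℓ = v n ℓ) :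
    ∀ n : ℕ, ∀ ℓ : ℕ, ℓ < L →
      v n ℓ = ∑ j ∈ Finset.range (min ℓ (2 ^ n - 1) + 1),
        (Abar ^ j).mulVec (w (ℓ - j)) := by
  intro n
  induction n with
  | zero =>
    intro ℓ hℓ
    simp [h0 ℓ hℓ, Matrix.one_mulVec]
  | succ n ih =>
    intro ℓ hℓ
    set k := 2 ^ n with hk
    by_cases hc : ℓ < k
    · rw [hkeep n ℓ hc, ih ℓ hℓ]
      have h1 : min ℓ (2 ^ n - 1) = ℓ := by omega
      have h2 : min ℓ (2 ^ (n + 1) - 1) = ℓ := by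
        have : k ≤ 2 ^ (n + 1) := by
          rw [pow_succ]; omega
        omega
      rw [h1, h2]
    · push_neg at hc
      have hkpos : 1 ≤ k := Nat.one_le_two_pow
      have hsub : ℓ - k < L := by omega
      rw [hupd n ℓ hc hℓ, ih ℓ hℓ, ih (ℓ - k) hsub]
      have hminℓ : min ℓ (2 ^ n - 1) = k - 1 := by omega
      set M := min (ℓ - k) (k - 1) with hM
      have htarget : min ℓ (2 ^ (n + 1) - 1) = M + k := by
        rw [show (2:ℕ) ^ (n + 1) = k + k from by rw [pow_succ]; omega]
        omega
      rw [hminℓ, htarget]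
      -- RHS: split the sum at k
      conv_rhs => rw [show M + k + 1 = k + (M + 1) by omega, Finset.sum_range_add]
      have h2 : (Abar ^ k).mulVec (∑ j ∈ Finset.range (M + 1),
            (Abar ^ j).mulVec (w (ℓ - k - j)))
          = ∑ i ∈ Finset.range (M + 1), (Abar ^ (k + i)).mulVec (w (ℓ - (k + i))) := by
        rw [← Matrix.mulVecLin_apply, map_sum]
        simp only [Matrix.mulVecLin_apply]
        refine Finset.sum_congr rfl fun i _ => ?_
        rw [Matrix.mulVec_mulVec, ← pow_add, Nat.sub_sub]
      rw [h2, add_comm, show k - 1 + 1 = k from by omega]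
end

section
/- Let Ā be an m×m, B̄ an m×p, C a q×m, and D a q×p complex matrix, let (u_ℓ)_{ℓ=0}^{L-1} be vectors in ℂ^p, and let N be a natural number. Define v_ℓ^{(0)} = B̄ u_ℓ, the cascade updates v_ℓ^{(n)} = Ā^{2^{n-1}} v_{ℓ-2^{n-1}}^{(n-1)} + v_ℓ^{(n-1)} for 2^{n-1} ≤ ℓ ≤ L-1 and v_ℓ^{(n)} = v_ℓ^{(n-1)} for 0 ≤ ℓ ≤ 2^{n-1}-1, and the cascade output ŷ_ℓ = C v_ℓ^{(N+1)} + D u_ℓ. Then ŷ_ℓ = ∑_{k=max(0, ℓ-2^{N+1}+1)}^{ℓ} C Ā^{ℓ-k} B̄ u_k + D u_ℓ, i.e. after N+1 cascade stages the output equals the convolution of the input with the impulse response truncated to lag 2^{N+1} - 1. -/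
/-- Correctness of the time-domain cascade algorithm: with initialization
`v_ℓ^(0) = B̄ u_ℓ`, the cascade updates
`v_ℓ^(n) = Ā^(2^(n-1)) v_{ℓ-2^(n-1)}^(n-1) + v_ℓ^(n-1)` for `2^(n-1) ≤ ℓ ≤ L-1`
(and `v_ℓ^(n) = v_ℓ^(n-1)` for `0 ≤ ℓ < 2^(n-1)`), and the output
`ŷ_ℓ = C v_ℓ^(N+1) + D u_ℓ`, one gets for every `0 ≤ ℓ ≤ L-1`
`ŷ_ℓ = ∑_{k=max(0, ℓ-2^(N+1)+1)}^{ℓ} C Ā^(ℓ-k) B̄ u_k + D u_ℓ`,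
the convolution of the input with the impulse response truncated to lag `2^(N+1)-1`.
(The stage-`n+1` update, `n ≥ 0`, encodes the stage-`n` update for `n ≥ 1`.) -/
theorem cascade_output_correct {m p q L : ℕ}
    (Abar : Matrix (Fin m) (Fin m) ℂ) (Bbar : Matrix (Fin m) (Fin p) ℂ)
    (C : Matrix (Fin q) (Fin m) ℂ) (D : Matrix (Fin q) (Fin p) ℂ) (N : ℕ)
    (u : ℕ → Fin p → ℂ) (v : ℕ → ℕ → Fin m → ℂ) (yhat : ℕ → Fin q → ℂ)
    (h0 : ∀ ℓ : ℕ, ℓ < L → v 0 ℓ = Bbar.mulVec (u ℓ))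
    (hupd : ∀ n : ℕ, ∀ ℓ : ℕ, 2 ^ n ≤ ℓ → ℓ < L →
      v (n + 1) ℓ = (Abar ^ 2 ^ n).mulVec (v n (ℓ - 2 ^ n)) + v n ℓ)
    (hkeep : ∀ n : ℕ, ∀ ℓ : ℕ, ℓ < 2 ^ n → v (n + 1) ℓ = v n ℓ)
    (hy : ∀ ℓ : ℕ, ℓ < L → yhat ℓ = C.mulVec (v (N + 1) ℓ) + D.mulVec (u ℓ)) :
    ∀ ℓ : ℕ, ℓ < L →
      yhat ℓ = ∑ k ∈ Finset.Icc (ℓ + 1 - 2 ^ (N + 1)) ℓ,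
          (C * Abar ^ (ℓ - k) * Bbar).mulVec (u k) + D.mulVec (u ℓ) := by
  have key : ∀ n : ℕ, ∀ ℓ : ℕ, ℓ < L →
      v n ℓ = ∑ k ∈ Finset.Icc (ℓ + 1 - 2 ^ n) ℓ,
        (Abar ^ (ℓ - k)).mulVec (Bbar.mulVec (u k)) := by
    intro n
    induction n with
    | zero =>
      intro ℓ hℓ
      have : Finset.Icc (ℓ + 1 - 2 ^ 0) ℓ = {ℓ} := by
        simp
      rw [this, Finset.sum_singleton, Nat.sub_self, pow_zero, Matrix.one_mulVec, h0 ℓ hℓ]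
    | succ n ih =>
      intro ℓ hℓ
      by_cases hcase : ℓ < 2 ^ n
      · rw [hkeep n ℓ hcase, ih ℓ hℓ]
        have h1 : ℓ + 1 - 2 ^ n = 0 := by omega
        have h2 : ℓ + 1 - 2 ^ (n + 1) = 0 := by
          have : 2 ^ n ≤ 2 ^ (n + 1) := Nat.pow_le_pow_right (by norm_num) (by omega)
          omega
        rw [h1, h2]
      · push_neg at hcase
        have hpow : 2 ^ (n + 1) = 2 ^ n + 2 ^ n := by ring
        have hℓ' : ℓ - 2 ^ n < L := lt_of_le_of_lt (Nat.sub_le _ _) hℓ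
        rw [hupd n ℓ hcase hℓ, ih ℓ hℓ, ih (ℓ - 2 ^ n) hℓ']
        -- rewrite the first term
        have hsum1 : (Abar ^ 2 ^ n).mulVec
            (∑ k ∈ Finset.Icc (ℓ - 2 ^ n + 1 - 2 ^ n) (ℓ - 2 ^ n),
              (Abar ^ (ℓ - 2 ^ n - k)).mulVec (Bbar.mulVec (u k)))
            = ∑ k ∈ Finset.Icc (ℓ + 1 - 2 ^ (n + 1)) (ℓ - 2 ^ n),
              (Abar ^ (ℓ - k)).mulVec (Bbar.mulVec (u k)) := by
          have hIcc : Finset.Icc (ℓ - 2 ^ n + 1 - 2 ^ n) (ℓ - 2 ^ n)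
              = Finset.Icc (ℓ + 1 - 2 ^ (n + 1)) (ℓ - 2 ^ n) := by
            congr 1
            omega
          rw [hIcc]
          rw [show (Abar ^ 2 ^ n).mulVec
              (∑ k ∈ Finset.Icc (ℓ + 1 - 2 ^ (n + 1)) (ℓ - 2 ^ n),
                (Abar ^ (ℓ - 2 ^ n - k)).mulVec (Bbar.mulVec (u k)))
              = ∑ k ∈ Finset.Icc (ℓ + 1 - 2 ^ (n + 1)) (ℓ - 2 ^ n),
                (Abar ^ 2 ^ n).mulVec ((Abar ^ (ℓ - 2 ^ n - k)).mulVec (Bbar.mulVec (u k)))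
            from map_sum (Abar ^ 2 ^ n).mulVecLin _ _]
          refine Finset.sum_congr rfl fun k hk => ?_
          simp only [Finset.mem_Icc] at hk
          rw [Matrix.mulVec_mulVec, ← pow_add,
            show 2 ^ n + (ℓ - 2 ^ n - k) = ℓ - k by omega]
        rw [hsum1]
        have hle1 : ℓ + 1 - 2 ^ (n + 1) ≤ ℓ - 2 ^ n := by
          have h1 : (1 : ℕ) ≤ 2 ^ n := Nat.one_le_two_pow
          omega
        have hle2 : ℓ - 2 ^ n ≤ ℓ := Nat.sub_le _ _
        have hmid : ℓ - 2 ^ n + 1 = ℓ + 1 - 2 ^ n := by omega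
        have hIoc : Finset.Ioc (ℓ - 2 ^ n) ℓ = Finset.Icc (ℓ + 1 - 2 ^ n) ℓ := by
          ext x
          simp only [Finset.mem_Icc, Finset.mem_Ioc]
          omega
        have hsplit : Finset.Icc (ℓ + 1 - 2 ^ (n + 1)) ℓ
            = Finset.Icc (ℓ + 1 - 2 ^ (n + 1)) (ℓ - 2 ^ n) ∪ Finset.Ioc (ℓ - 2 ^ n) ℓ := by
          ext x
          simp only [Finset.mem_Icc, Finset.mem_Ioc, Finset.mem_union]
          omega
        have hdisj : Disjoint (Finset.Icc (ℓ + 1 - 2 ^ (n + 1)) (ℓ - 2 ^ n))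
            (Finset.Ioc (ℓ - 2 ^ n) ℓ) := by
          rw [Finset.disjoint_left]
          intro x hx hx'
          simp only [Finset.mem_Icc, Finset.mem_Ioc] at hx hx'
          omega
        rw [hsplit, Finset.sum_union hdisj, hIoc]
  intro ℓ hℓ
  rw [hy ℓ hℓ, key (N + 1) ℓ hℓ,
    show C.mulVec (∑ k ∈ Finset.Icc (ℓ + 1 - 2 ^ (N + 1)) ℓ,
        (Abar ^ (ℓ - k)).mulVec (Bbar.mulVec (u k)))
      = ∑ k ∈ Finset.Icc (ℓ + 1 - 2 ^ (N + 1)) ℓ,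
        C.mulVec ((Abar ^ (ℓ - k)).mulVec (Bbar.mulVec (u k)))
      from map_sum C.mulVecLin _ _]
  congr 1
  refine Finset.sum_congr rfl fun k hk => ?_
  rw [Matrix.mulVec_mulVec, Matrix.mulVec_mulVec]
end

section
/- Let Ā be an m×m complex matrix with operator norm γ = ‖Ā‖ < 1, let B̄ be an m×p, C a q×m, and D a q×p complex matrix, let (u_k)_{k=0}^{L-1} be vectors in ℂ^p with ‖u_k‖ ≤ U for all k, and let N be a natural number. Let y_ℓ = ∑_{k=0}^{ℓ} C Ā^{ℓ-k} B̄ u_k + D u_ℓ be the exact output and ŷ_ℓ = ∑_{k=max(0, ℓ-2^{N+1}+1)}^{ℓ} C Ā^{ℓ-k} B̄ u_k + D u_ℓ the output of the N+1-stage cascade. Then for every 0 ≤ ℓ ≤ L-1, ‖y_ℓ - ŷ_ℓ‖ ≤ (γ^{2^{N+1}} / (1 - γ)) · ‖C‖ · ‖B̄‖ · U. -/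
/-!
The cascade keeps exactly the last `2^(N+1)` terms of the convolution `y_ℓ = ∑ C Āⁿ B̄ u_{ℓ-n}`,
so the error is the discarded tail `∑_{k < ℓ+1-2^(N+1)} C Ā^(ℓ-k) B̄ u_k`. Every discarded lag
`ℓ - k` is at least `2^(N+1)`, so by submultiplicativity of the operator norm the tail is
dominated by the geometric series `‖C‖ ‖B̄‖ U ∑_{n ≥ 2^(N+1)} γⁿ = ‖C‖ ‖B̄‖ U γ^(2^(N+1)) / (1-γ)`.
-/

open Finset
open scoped Matrix.Norms.L2Operator

theorem Finset.sum_range_succ_sub_sum_Icc {M : Type*} [AddCommGroup M] (f : ℕ → M) (n S : ℕ) :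
    ∑ k ∈ range (n + 1), f k - ∑ k ∈ Icc (n + 1 - S) n, f k = ∑ k ∈ range (n + 1 - S), f k := by
  rw [← Ico_add_one_right_eq_Icc, ← sum_range_add_sum_Ico f (Nat.sub_le (n + 1) S),
    add_sub_cancel_right]

theorem sum_range_pow_sub_le_of_lt_one {K : Type*} [Field K] [LinearOrder K]
    [IsStrictOrderedRing K] {γ : K} (hγ0 : 0 ≤ γ) (hγ1 : γ < 1) (n S : ℕ) :
    ∑ k ∈ range (n + 1 - S), γ ^ (n - k) ≤ γ ^ S / (1 - γ) :=
  calc ∑ k ∈ range (n + 1 - S), γ ^ (n - k)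
      = ∑ j ∈ Ico (n + 1 - (n + 1 - S)) (n + 1), γ ^ j := by
        rw [← Nat.Ico_zero_eq_range, sum_Ico_reflect _ _ (Nat.sub_le _ _), Nat.sub_zero]
    _ ≤ ∑ j ∈ Ico S (n + 1), γ ^ j :=
        sum_le_sum_of_subset_of_nonneg
          (fun j hj => by simp only [mem_Ico] at hj ⊢; omega)
          (fun j _ _ => pow_nonneg hγ0 j)
    _ ≤ γ ^ S / (1 - γ) := geom_sum_Ico_le_of_lt_one hγ0 hγ1

theorem norm_sum_range_sub_le_of_norm_le_pow {E : Type*} [SeminormedAddCommGroup E]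
    (f : ℕ → E) {c γ : ℝ} (hc : 0 ≤ c) (hγ0 : 0 ≤ γ) (hγ1 : γ < 1) (n S : ℕ)
    (hf : ∀ k < n + 1 - S, ‖f k‖ ≤ c * γ ^ (n - k)) :
    ‖∑ k ∈ range (n + 1 - S), f k‖ ≤ c * γ ^ S / (1 - γ) :=
  calc ‖∑ k ∈ range (n + 1 - S), f k‖
      ≤ ∑ k ∈ range (n + 1 - S), c * γ ^ (n - k) :=
        norm_sum_le_of_le _ fun k hk => hf k (mem_range.mp hk)
    _ = c * ∑ k ∈ range (n + 1 - S), γ ^ (n - k) := (mul_sum _ _ _).symm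
    _ ≤ c * (γ ^ S / (1 - γ)) :=
        mul_le_mul_of_nonneg_left (sum_range_pow_sub_le_of_lt_one hγ0 hγ1 n S) hc
    _ = c * γ ^ S / (1 - γ) := (mul_div_assoc _ _ _).symm

namespace Matrix

variable {𝕜 : Type*} [RCLike 𝕜] {l m n : Type*} [Fintype l] [Fintype m] [Fintype n]
  [DecidableEq n]

theorem l2_opNorm_toEuclideanLin_apply_le (A : Matrix m n 𝕜) (x : EuclideanSpace 𝕜 n) :
    ‖toEuclideanLin A x‖ ≤ ‖A‖ * ‖x‖ :=
  A.l2_opNorm_mulVec x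

theorem l2_opNorm_mul_pow_mul_le [DecidableEq m] (C : Matrix l m 𝕜) (A : Matrix m m 𝕜)
    (B : Matrix m n 𝕜) {k : ℕ} (hk : 0 < k) :
    ‖C * A ^ k * B‖ ≤ ‖C‖ * ‖A‖ ^ k * ‖B‖ :=
  calc ‖C * A ^ k * B‖ ≤ ‖C‖ * ‖A ^ k‖ * ‖B‖ := by
        grw [l2_opNorm_mul, l2_opNorm_mul]
    _ ≤ ‖C‖ * ‖A‖ ^ k * ‖B‖ := by grw [norm_pow_le' A hk]

end Matrix

/-- Error bound for the cascade algorithm in time domain: if `γ = ‖Ā‖ < 1` (operator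
norm), the inputs satisfy `‖u_k‖ ≤ U` (Euclidean norm), `y_ℓ = ∑_{k=0}^{ℓ} C Ā^(ℓ-k) B̄ u_k + D u_ℓ`
is the exact LTI output and
`ŷ_ℓ = ∑_{k=max(0,ℓ-2^(N+1)+1)}^{ℓ} C Ā^(ℓ-k) B̄ u_k + D u_ℓ` the output of the
`N+1`-stage cascade, then `‖y_ℓ - ŷ_ℓ‖ ≤ (γ^(2^(N+1))/(1-γ)) ⬝ ‖C‖ ⬝ ‖B̄‖ ⬝ U`
for every `0 ≤ ℓ ≤ L-1`. -/
theorem cascade_output_error_bound {m p q L : ℕ}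
    (Abar : Matrix (Fin m) (Fin m) ℂ) (Bbar : Matrix (Fin m) (Fin p) ℂ)
    (C : Matrix (Fin q) (Fin m) ℂ) (D : Matrix (Fin q) (Fin p) ℂ)
    (γ : ℝ) (hγ : γ = ‖Abar‖) (hγ1 : γ < 1) (N : ℕ)
    (u : ℕ → EuclideanSpace ℂ (Fin p)) (U : ℝ) (hU : ∀ k : ℕ, k < L → ‖u k‖ ≤ U)
    (y yhat : ℕ → EuclideanSpace ℂ (Fin q))
    (hy : ∀ ℓ : ℕ, ℓ < L → y ℓ = ∑ k ∈ Finset.range (ℓ + 1),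
        Matrix.toEuclideanLin (C * Abar ^ (ℓ - k) * Bbar) (u k)
          + Matrix.toEuclideanLin D (u ℓ))
    (hyhat : ∀ ℓ : ℕ, ℓ < L → yhat ℓ = ∑ k ∈ Finset.Icc (ℓ + 1 - 2 ^ (N + 1)) ℓ,
        Matrix.toEuclideanLin (C * Abar ^ (ℓ - k) * Bbar) (u k)
          + Matrix.toEuclideanLin D (u ℓ)) :
    ∀ ℓ : ℕ, ℓ < L →
      ‖y ℓ - yhat ℓ‖ ≤ γ ^ 2 ^ (N + 1) / (1 - γ) * ‖C‖ * ‖Bbar‖ * U := by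
  intro ℓ hℓ
  have hγ0 : 0 ≤ γ := hγ ▸ norm_nonneg Abar
  have hU0 : 0 ≤ U := (norm_nonneg _).trans (hU ℓ hℓ)
  rw [hy ℓ hℓ, hyhat ℓ hℓ, add_sub_add_right_eq_sub, sum_range_succ_sub_sum_Icc]
  have hterm : ∀ k < ℓ + 1 - 2 ^ (N + 1),
      ‖Matrix.toEuclideanLin (C * Abar ^ (ℓ - k) * Bbar) (u k)‖
        ≤ ‖C‖ * ‖Bbar‖ * U * γ ^ (ℓ - k) := by
    intro k hk
    have hlag : 0 < ℓ - k := by have := Nat.one_le_two_pow (n := N + 1); omega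
    calc ‖Matrix.toEuclideanLin (C * Abar ^ (ℓ - k) * Bbar) (u k)‖
        ≤ ‖C‖ * γ ^ (ℓ - k) * ‖Bbar‖ * U := by
          grw [Matrix.l2_opNorm_toEuclideanLin_apply_le,
            Matrix.l2_opNorm_mul_pow_mul_le _ _ _ hlag, hU k (by omega), hγ]
      _ = ‖C‖ * ‖Bbar‖ * U * γ ^ (ℓ - k) := by ring
  calc _ ≤ ‖C‖ * ‖Bbar‖ * U * γ ^ 2 ^ (N + 1) / (1 - γ) :=
        norm_sum_range_sub_le_of_norm_le_pow _ (by positivity) hγ0 hγ1 ℓ _ hterm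
    _ = γ ^ 2 ^ (N + 1) / (1 - γ) * ‖C‖ * ‖Bbar‖ * U := by ring
end

section
/- Let A be an m×m real matrix with entries A_{n,k} = -√(2n+1)·√(2k+1) for n > k, A_{n,n} = -(n+1), and A_{n,k} = 0 for n < k (indices 1 ≤ n, k ≤ m), and let Δ > 0. Then the matrix I_m - (Δ/2)A is invertible, the matrix Ā = (I_m - (Δ/2)A)^{-1}(I_m + (Δ/2)A) is lower triangular, and its diagonal entries (hence its eigenvalues) are d_n = (1 - Δ(n+1)/2)/(1 + Δ(n+1)/2) for n = 1, …, m. -/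
private lemma diag_mul_tri {m : ℕ} (P Q : Matrix (Fin m) (Fin m) ℝ)
    (hP : P.BlockTriangular OrderDual.toDual) (hQ : Q.BlockTriangular OrderDual.toDual)
    (i : Fin m) : (P * Q) i i = P i i * Q i i := by
  rw [Matrix.mul_apply]
  refine Finset.sum_eq_single i ?_ (fun h => absurd (Finset.mem_univ i) h)
  intro k _ hk
  rcases lt_or_gt_of_ne hk with h | h
  · rw [hQ (show OrderDual.toDual i < OrderDual.toDual k by simpa using h), mul_zero]
  · rw [hP (show OrderDual.toDual k < OrderDual.toDual i by simpa using h), zero_mul]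

/-- Let `A` be the `m × m` HiPPO matrix with entries `A_{n,k} = -√(2n+1)·√(2k+1)` for
`n > k`, `A_{n,n} = -(n+1)` and `A_{n,k} = 0` for `n < k` (paper indices `1 ≤ n,k ≤ m`;
here `i : Fin m` corresponds to `n = i + 1`), and let `Δ > 0`. Then `I_m - (Δ/2)A` is
invertible, the bilinear discretization `Ā = (I_m - (Δ/2)A)⁻¹ (I_m + (Δ/2)A)` is lower
triangular, and its diagonal entries (hence its eigenvalues) are
`d_n = (1 - Δ(n+1)/2)/(1 + Δ(n+1)/2)`. -/
theorem hippo_bilinear_triangular {m : ℕ} (A : Matrix (Fin m) (Fin m) ℝ)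
    (hlow : ∀ i j : Fin m, (j : ℕ) < (i : ℕ) →
      A i j = -(Real.sqrt (2 * ((i : ℕ) : ℝ) + 3) * Real.sqrt (2 * ((j : ℕ) : ℝ) + 3)))
    (hdiag : ∀ i : Fin m, A i i = -(((i : ℕ) : ℝ) + 2))
    (hupp : ∀ i j : Fin m, (i : ℕ) < (j : ℕ) → A i j = 0)
    (Δ : ℝ) (hΔ : 0 < Δ) :
    IsUnit (1 - (Δ / 2) • A) ∧
    (∀ i j : Fin m, (i : ℕ) < (j : ℕ) →
      ((1 - (Δ / 2) • A)⁻¹ * (1 + (Δ / 2) • A)) i j = 0) ∧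
    (∀ i : Fin m,
      ((1 - (Δ / 2) • A)⁻¹ * (1 + (Δ / 2) • A)) i i
        = (1 - Δ * (((i : ℕ) : ℝ) + 2) / 2) / (1 + Δ * (((i : ℕ) : ℝ) + 2) / 2)) := by
  set B : Matrix (Fin m) (Fin m) ℝ := 1 - (Δ / 2) • A with hB
  set C : Matrix (Fin m) (Fin m) ℝ := 1 + (Δ / 2) • A with hC
  have hBt : B.BlockTriangular OrderDual.toDual := by
    intro i j hij
    have hij' : (i : ℕ) < (j : ℕ) := by simpa using hij
    have hne : i ≠ j := Fin.ne_of_lt (Fin.lt_def.mpr hij')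
    simp [hB, Matrix.sub_apply, Matrix.one_apply_ne hne, Matrix.smul_apply, hupp i j hij']
  have hCt : C.BlockTriangular OrderDual.toDual := by
    intro i j hij
    have hij' : (i : ℕ) < (j : ℕ) := by simpa using hij
    have hne : i ≠ j := Fin.ne_of_lt (Fin.lt_def.mpr hij')
    simp [hC, Matrix.add_apply, Matrix.one_apply_ne hne, Matrix.smul_apply, hupp i j hij']
  have hBdiag : ∀ i : Fin m, B i i = 1 + Δ * (((i : ℕ) : ℝ) + 2) / 2 := by
    intro i
    simp only [hB, Matrix.sub_apply, Matrix.smul_apply, Matrix.one_apply_eq, hdiag i,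
      smul_eq_mul]
    ring
  have hCdiag : ∀ i : Fin m, C i i = 1 - Δ * (((i : ℕ) : ℝ) + 2) / 2 := by
    intro i
    simp only [hC, Matrix.add_apply, Matrix.smul_apply, Matrix.one_apply_eq, hdiag i,
      smul_eq_mul]
    ring
  have hBdiag_pos : ∀ i : Fin m, 0 < B i i := by
    intro i
    rw [hBdiag i]
    have : 0 < Δ * (((i : ℕ) : ℝ) + 2) / 2 := by positivity
    linarith
  have hdet : B.det ≠ 0 := by
    rw [Matrix.det_of_lowerTriangular B hBt]
    exact Finset.prod_ne_zero_iff.mpr fun i _ => (hBdiag_pos i).ne'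
  have hunit : IsUnit B := (Matrix.isUnit_iff_isUnit_det B).mpr (isUnit_iff_ne_zero.mpr hdet)
  haveI : Invertible B := hunit.invertible
  have hBit : B⁻¹.BlockTriangular OrderDual.toDual :=
    Matrix.blockTriangular_inv_of_blockTriangular hBt
  refine ⟨hunit, ?_, ?_⟩
  · intro i j hij
    exact (hBit.mul hCt) (show OrderDual.toDual j < OrderDual.toDual i by simpa using hij)
  · intro i
    have hinv_diag : B⁻¹ i i = (B i i)⁻¹ := by
      have h1 : (B⁻¹ * B) i i = B⁻¹ i i * B i i := diag_mul_tri _ _ hBit hBt i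
      rw [Matrix.nonsing_inv_mul B (isUnit_iff_ne_zero.mpr hdet), Matrix.one_apply_eq] at h1
      exact eq_inv_of_mul_eq_one_left h1.symm
    rw [diag_mul_tri _ _ hBit hCt i, hinv_diag, hBdiag, hCdiag, inv_mul_eq_div]
end

section
/- Let A be the m×m HiPPO matrix with entries A_{n,k} = -√(2n+1)·√(2k+1) for n > k, A_{n,n} = -(n+1), and A_{n,k} = 0 for n < k (indices 1 ≤ n, k ≤ m), and let Δ > 0 satisfy Δ < 2/(m+1). Then every eigenvalue d of Ā = (I_m - (Δ/2)A)^{-1}(I_m + (Δ/2)A) satisfies 0 < d < 1; in particular the spectral radius of Ā is strictly less than 1. -/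
/-!
Both `1 - (Δ/2)A` and `1 + (Δ/2)A` are lower triangular and `(1 - (Δ/2)A) Ā = 1 + (Δ/2)A`, so
`det (z (1 - (Δ/2)A) - (1 + (Δ/2)A))` is the product of the terms `z (1 - y_n) - (1 + y_n)` with
`y_n = (Δ/2)A_nn = -Δ(n+1)/2`. Hence, over `ℝ` and over `ℂ` alike, the eigenvalues of `Ā` are
the real numbers `(1 + y_n)/(1 - y_n)`, and the step-size bound `-1 < y_n ≤ -Δ` places them in
`(0, (1 - Δ)/(1 + Δ)]`.
-/

namespace Matrix

theorem BlockTriangular.smul {n α R S : Type*} [LT α] [Zero R] [SMulZeroClass S R] {b : n → α}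
    {M : Matrix n n R} (hM : M.BlockTriangular b) (s : S) : (s • M).BlockTriangular b :=
  fun i j hij => by simp [hM hij]

variable {n : Type*} [Fintype n] [DecidableEq n] [LinearOrder n]

theorem det_eq_zero_iff_exists_diag_eq_zero_of_isLowerTriangular {R : Type*} [CommRing R]
    [NoZeroDivisors R] [Nontrivial R] {T : Matrix n n R} (hT : T.IsLowerTriangular) :
    T.det = 0 ↔ ∃ i, T i i = 0 := by
  simp [det_of_isLowerTriangular T hT, Finset.prod_eq_zero_iff]

variable {K L : Type*} [Field K] [Field L] {B C M : Matrix n n K}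

theorem spectrum_eq_range_of_mul_eq_of_isLowerTriangular (hB : B.IsLowerTriangular)
    (hC : C.IsLowerTriangular) (hBd : ∀ i, B i i ≠ 0) (hM : B * M = C) :
    spectrum K M = Set.range fun i => C i i / B i i := by
  ext z
  have hdetB : B.det ≠ 0 := by
    rw [det_of_isLowerTriangular B hB]
    exact Finset.prod_ne_zero_iff.2 fun i _ => hBd i
  have hfactor : B * (algebraMap K _ z - M) = z • B - C := by
    rw [Algebra.algebraMap_eq_smul_one, Matrix.mul_sub, Matrix.mul_smul, mul_one, hM]
  have hT : (z • B - C).IsLowerTriangular := (hB.smul z).sub hC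
  calc z ∈ spectrum K M ↔ (algebraMap K _ z - M).det = 0 := by
        rw [spectrum.mem_iff, isUnit_iff_isUnit_det, isUnit_iff_ne_zero, not_not]
    _ ↔ (z • B - C).det = 0 := by rw [← hfactor, det_mul, mul_eq_zero, or_iff_right hdetB]
    _ ↔ ∃ i : n, z * B i i - C i i = 0 := by
        simp only [det_eq_zero_iff_exists_diag_eq_zero_of_isLowerTriangular hT, sub_apply,
          smul_apply, smul_eq_mul]
    _ ↔ z ∈ Set.range fun i => C i i / B i i := by
        simp only [Set.mem_range, sub_eq_zero, div_eq_iff (hBd _), eq_comm]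

theorem spectrum_map_eq_image_of_mul_eq_of_isLowerTriangular (f : K →+* L)
    (hB : B.IsLowerTriangular) (hC : C.IsLowerTriangular) (hBd : ∀ i, B i i ≠ 0)
    (hM : B * M = C) : spectrum L (M.map f) = f '' spectrum K M := by
  have hMf : B.map f * M.map f = C.map f := by rw [← Matrix.map_mul, hM]
  rw [spectrum_eq_range_of_mul_eq_of_isLowerTriangular hB hC hBd hM,
    spectrum_eq_range_of_mul_eq_of_isLowerTriangular (hB.map f) (hC.map f)
      (fun i => by simpa using hBd i) hMf, ← Set.range_comp]
  simp [Function.comp_def]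

noncomputable def bilinearDiscretization (c : K) (A : Matrix n n K) : Matrix n n K :=
  (1 - c • A)⁻¹ * (1 + c • A)

variable {c : K} {A : Matrix n n K}

theorem isUnit_det_one_sub_smul_of_isLowerTriangular (hA : A.IsLowerTriangular)
    (hA' : ∀ i, 1 - c * A i i ≠ 0) : IsUnit (1 - c • A).det := by
  rw [det_of_isLowerTriangular _ (blockTriangular_one.sub (hA.smul c)), isUnit_iff_ne_zero]
  exact Finset.prod_ne_zero_iff.2 fun i _ => by simpa using hA' i

theorem one_sub_smul_mul_bilinearDiscretization (hA : A.IsLowerTriangular)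
    (hA' : ∀ i, 1 - c * A i i ≠ 0) :
    (1 - c • A) * bilinearDiscretization c A = 1 + c • A :=
  mul_nonsing_inv_cancel_left _ _ (isUnit_det_one_sub_smul_of_isLowerTriangular hA hA')

theorem spectrum_bilinearDiscretization (hA : A.IsLowerTriangular)
    (hA' : ∀ i, 1 - c * A i i ≠ 0) :
    spectrum K (bilinearDiscretization c A) =
      Set.range fun i => (1 + c * A i i) / (1 - c * A i i) := by
  simpa using spectrum_eq_range_of_mul_eq_of_isLowerTriangular
    (blockTriangular_one.sub (hA.smul c)) (blockTriangular_one.add (hA.smul c))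
    (fun i => by simpa using hA' i) (one_sub_smul_mul_bilinearDiscretization hA hA')

theorem spectrum_map_bilinearDiscretization (hA : A.IsLowerTriangular)
    (hA' : ∀ i, 1 - c * A i i ≠ 0) (f : K →+* L) :
    spectrum L ((bilinearDiscretization c A).map f) =
      f '' spectrum K (bilinearDiscretization c A) :=
  spectrum_map_eq_image_of_mul_eq_of_isLowerTriangular f
    (blockTriangular_one.sub (hA.smul c)) (blockTriangular_one.add (hA.smul c))
    (fun i => by simpa using hA' i) (one_sub_smul_mul_bilinearDiscretization hA hA')

end Matrix

theorem bilinear_ratio_pos_and_le {Δ y : ℝ} (hΔ : 0 < Δ) (hy : -1 < y) (hyΔ : y ≤ -Δ) :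
    0 < (1 + y) / (1 - y) ∧ (1 + y) / (1 - y) ≤ (1 - Δ) / (1 + Δ) := by
  refine ⟨div_pos (by linarith) (by linarith), ?_⟩
  rw [div_le_div_iff₀ (by linarith) (by linarith)]
  nlinarith

theorem hippo_bilinear_spectrum_general {m : ℕ} (A : Matrix (Fin m) (Fin m) ℝ)
    (hdiag : ∀ i : Fin m, A i i = -(((i : ℕ) : ℝ) + 2))
    (hupp : ∀ i j : Fin m, (i : ℕ) < (j : ℕ) → A i j = 0)
    (Δ : ℝ) (hΔ : 0 < Δ) (hΔ2 : Δ < 2 / ((m : ℝ) + 1))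
    (Abar : Matrix (Fin m) (Fin m) ℝ)
    (hAbar : Abar = (1 - (Δ / 2) • A)⁻¹ * (1 + (Δ / 2) • A)) :
    (∀ d ∈ spectrum ℝ Abar, 0 < d ∧ d < 1) ∧
      spectralRadius ℂ (Abar.map (Complex.ofReal : ℝ → ℂ)) < 1 := by
  have hA : A.IsLowerTriangular := fun i j hij => hupp i j hij
  have hy (i : Fin m) : -1 < Δ / 2 * A i i ∧ Δ / 2 * A i i ≤ -Δ := by
    have hi : ((i : ℕ) : ℝ) + 1 ≤ m := by exact_mod_cast i.isLt
    have hΔm : Δ * ((m : ℝ) + 1) < 2 := (lt_div_iff₀ (by positivity)).1 hΔ2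
    rw [hdiag]
    constructor <;> nlinarith [(i : ℕ).cast_nonneg (α := ℝ)]
  have hden (i : Fin m) : 1 - Δ / 2 * A i i ≠ 0 := by linarith [hy i]
  replace hAbar : Abar = Matrix.bilinearDiscretization (Δ / 2) A := hAbar
  have hspec : ∀ d ∈ spectrum ℝ Abar, 0 < d ∧ d ≤ (1 - Δ) / (1 + Δ) := by
    rw [hAbar, Matrix.spectrum_bilinearDiscretization hA hden]
    rintro _ ⟨i, rfl⟩
    exact bilinear_ratio_pos_and_le hΔ (hy i).1 (hy i).2
  have hr : (1 - Δ) / (1 + Δ) < 1 := by rw [div_lt_one (by linarith)]; linarith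
  refine ⟨fun d hd => ⟨(hspec d hd).1, (hspec d hd).2.trans_lt hr⟩, ?_⟩
  calc spectralRadius ℂ (Abar.map (Complex.ofReal : ℝ → ℂ))
      ≤ ENNReal.ofReal ((1 - Δ) / (1 + Δ)) := by
        refine iSup₂_le fun z hz => ?_
        rw [show (Complex.ofReal : ℝ → ℂ) = Complex.ofRealHom from rfl, hAbar,
          Matrix.spectrum_map_bilinearDiscretization hA hden, ← hAbar] at hz
        obtain ⟨d, hd, rfl⟩ := hz
        rw [← enorm_eq_nnnorm, ← ofReal_norm, Complex.ofRealHom_eq_coe, Complex.norm_real,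
          Real.norm_of_nonneg (hspec d hd).1.le]
        exact ENNReal.ofReal_le_ofReal (hspec d hd).2
    _ < 1 := ENNReal.ofReal_lt_one.2 hr

/-- Let `A` be the `m × m` HiPPO matrix (paper indices `1 ≤ n,k ≤ m`; here `i : Fin m`
corresponds to `n = i + 1`) and let `0 < Δ < 2/(m+1)`. Then every eigenvalue `d` of the
bilinear discretization `Ā = (I_m - (Δ/2)A)⁻¹ (I_m + (Δ/2)A)` satisfies `0 < d < 1`;
in particular the spectral radius of `Ā` is strictly less than `1`. -/
theorem hippo_bilinear_spectrum {m : ℕ} (A : Matrix (Fin m) (Fin m) ℝ)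
    (hlow : ∀ i j : Fin m, (j : ℕ) < (i : ℕ) →
      A i j = -(Real.sqrt (2 * ((i : ℕ) : ℝ) + 3) * Real.sqrt (2 * ((j : ℕ) : ℝ) + 3)))
    (hdiag : ∀ i : Fin m, A i i = -(((i : ℕ) : ℝ) + 2))
    (hupp : ∀ i j : Fin m, (i : ℕ) < (j : ℕ) → A i j = 0)
    (Δ : ℝ) (hΔ : 0 < Δ) (hΔ2 : Δ < 2 / ((m : ℝ) + 1))
    (Abar : Matrix (Fin m) (Fin m) ℝ)
    (hAbar : Abar = (1 - (Δ / 2) • A)⁻¹ * (1 + (Δ / 2) • A)) :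
    (∀ d ∈ spectrum ℝ Abar, 0 < d ∧ d < 1) ∧
      spectralRadius ℂ (Abar.map (Complex.ofReal : ℝ → ℂ)) < 1 :=
  hippo_bilinear_spectrum_general A hdiag hupp Δ hΔ hΔ2 Abar hAbar
end
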